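/- arXiv:2206.07408 — 9 statements merged into one kernel-verified Lean document; each statement's English description precedes it below -/
import Mathlib

section
/- Let a, b, c be real numbers with a + b + c = 0, and suppose ((a² + b² + c²)/3)³ = 2·a²b²c². Then (a, b, c) is a real scalar multiple of a permutation of (1, 1, -2). -/
theorem stmt_1 (a b c : ℝ) (h : a + b + c = 0)
    (heq : ((a ^ 2 + b ^ 2 + c ^ 2) / 3) ^ 3 = 2 * (a ^ 2 * b ^ 2 * c ^ 2)) :
    ∃ (t : ℝ) (σ : Equiv.Perm (Fin 3)),
      (![a, b, c] : Fin 3 → ℝ) = fun i => t * (![1, 1, -2] : Fin 3 → ℝ) (σ i) := by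
  have hc : c = -a - b := by linarith
  subst hc
  have key : ((a - b) * (a + 2 * b) * (2 * a + b)) ^ 2 = 0 := by
    linear_combination (27 / 2) * heq
  have key' : (a - b) * (a + 2 * b) * (2 * a + b) = 0 := by
    exact pow_eq_zero_iff (n := 2) (by norm_num) |>.mp key
  rcases mul_eq_zero.mp key' with h1 | h2
  · rcases mul_eq_zero.mp h1 with h3 | h4
    · -- a = b, triple = a • (1,1,-2)
      refine ⟨a, Equiv.refl _, ?_⟩
      funext i
      fin_cases i <;> simp <;> linarith
    · -- a = -2b, triple = b • (-2,1,1)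
      refine ⟨b, Equiv.swap 0 2, ?_⟩
      funext i
      fin_cases i <;> simp [Equiv.swap_apply_def] <;> linarith
  · -- b = -2a, triple = a • (1,-2,1)
    refine ⟨a, Equiv.swap 1 2, ?_⟩
    funext i
    fin_cases i <;> simp [Equiv.swap_apply_def] <;> linarith
end

section
/- Let a, b, c be real numbers with a + b + c = 0. Then there exist real numbers x, y, z such that x² + y² + z² = (a² + b² + c²)/2 and 2xyz = abc. Equivalently, there exists a real symmetric 3×3 matrix with zero diagonal whose characteristic polynomial equals that of diag(a, b, c). -/
/-!
A symmetric matrix with zero diagonal has characteristic polynomial `X³ - (x² + y² + z²) X - 2xyz`,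
while that of `diag(a, b, c)` with `a + b + c = 0` is `X³ + (ab + bc + ca) X - abc`; so it suffices
to solve `x² + y² + z² = -(ab + bc + ca)` and `2xyz = abc`. Since `ab + bc + ca ≤ 0`, one of the
products, say `bc`, is nonpositive, and `(x, y, z) = (a, t, -t)` with `t² = -bc/2` is a solution.
-/

open Polynomial

lemma charpoly_symm_zero_diag_fin_three {R : Type*} [CommRing R] (x y z : R) :
    (Matrix.of !![(0 : R), x, y; x, 0, z; y, z, 0]).charpoly
      = X ^ 3 - C (x ^ 2 + y ^ 2 + z ^ 2) * X - C (2 * (x * y * z)) := by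
  change (!![(0 : R), x, y; x, 0, z; y, z, 0]).charpoly = _
  rw [Matrix.charpoly, Matrix.det_fin_three]
  simp only [Fin.isValue, Matrix.charmatrix_apply_eq, Matrix.of_apply, Matrix.cons_val',
    Matrix.cons_val_zero, Matrix.cons_val_fin_one, map_zero, sub_zero, Matrix.cons_val_one,
    Matrix.cons_val, ne_eq, Fin.reduceEq, not_false_eq_true, Matrix.charmatrix_apply_ne, mul_neg,
    X_mul_C, neg_mul, neg_neg, zero_ne_one, one_ne_zero, map_add, map_pow, map_mul, map_ofNat]
  ring

lemma charpoly_symm_zero_diag_eq_charpoly_diagonal {R : Type*} [CommRing R] {a b c x y z : R}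
    (h : a + b + c = 0) (hsq : x ^ 2 + y ^ 2 + z ^ 2 = -(a * b + b * c + c * a))
    (hprod : 2 * (x * y * z) = a * b * c) :
    (Matrix.of !![(0 : R), x, y; x, 0, z; y, z, 0]).charpoly
      = (Matrix.diagonal ![a, b, c]).charpoly := by
  have hc : c = -(a + b) := by linear_combination h
  rw [charpoly_symm_zero_diag_fin_three, Matrix.charpoly_diagonal, Fin.prod_univ_three, hsq, hprod]
  subst hc
  simp only [Matrix.cons_val_zero, Matrix.cons_val_one, Matrix.cons_val_two, Matrix.head_cons,
    Matrix.tail_cons, map_add, map_mul, map_neg]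
  ring

lemma exists_sq_add_sq_add_sq_and_mul_of_mul_nonpos {a b c : ℝ} (h : a + b + c = 0)
    (hbc : b * c ≤ 0) :
    ∃ x y z : ℝ, x ^ 2 + y ^ 2 + z ^ 2 = (a ^ 2 + b ^ 2 + c ^ 2) / 2 ∧ 2 * (x * y * z) = a * b * c := by
  have ht : √(-(b * c) / 2) ^ 2 = -(b * c) / 2 := Real.sq_sqrt (by linarith)
  exact ⟨a, √(-(b * c) / 2), -√(-(b * c) / 2),
    by linear_combination 2 * ht + ((a - b - c) / 2) * h, by linear_combination (-2 * a) * ht⟩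

lemma exists_sq_add_sq_add_sq_and_mul {a b c : ℝ} (h : a + b + c = 0) :
    ∃ x y z : ℝ, x ^ 2 + y ^ 2 + z ^ 2 = (a ^ 2 + b ^ 2 + c ^ 2) / 2 ∧ 2 * (x * y * z) = a * b * c := by
  have hsum : a * b + b * c + c * a = -(a ^ 2 + b ^ 2 + c ^ 2) / 2 := by
    linear_combination (a + b + c) / 2 * h
  rcases le_or_gt (b * c) 0 with hbc | hbc
  · exact exists_sq_add_sq_add_sq_and_mul_of_mul_nonpos h hbc
  rcases le_or_gt (c * a) 0 with hca | hca
  · obtain ⟨x, y, z, hsq, hprod⟩ :=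
      exists_sq_add_sq_add_sq_and_mul_of_mul_nonpos (a := b) (b := c) (c := a) (by linarith) hca
    exact ⟨x, y, z, by linarith, by linarith⟩
  · have hab : a * b ≤ 0 := by linarith [sq_nonneg a, sq_nonneg b, sq_nonneg c]
    obtain ⟨x, y, z, hsq, hprod⟩ :=
      exists_sq_add_sq_add_sq_and_mul_of_mul_nonpos (a := c) (b := a) (c := b) (by linarith) hab
    exact ⟨x, y, z, by linarith, by linarith⟩

theorem stmt_2 (a b c : ℝ) (h : a + b + c = 0) :
    ∃ x y z : ℝ,
      (x ^ 2 + y ^ 2 + z ^ 2 = (a ^ 2 + b ^ 2 + c ^ 2) / 2 ∧ 2 * (x * y * z) = a * b * c) ∧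
      (Matrix.of !![(0:ℝ), x, y; x, 0, z; y, z, 0]).charpoly
        = (Matrix.diagonal ![a, b, c]).charpoly := by
  obtain ⟨x, y, z, hsq, hprod⟩ := exists_sq_add_sq_add_sq_and_mul h
  refine ⟨x, y, z, ⟨hsq, hprod⟩, charpoly_symm_zero_diag_eq_charpoly_diagonal h ?_ hprod⟩
  linear_combination hsq + (a + b + c) / 2 * h
end

section
/- Let V be a finite-dimensional real inner product space, let w₁,…,w_k ∈ V be linearly independent, W = span(w₁,…,w_k), and let v ∈ V. Then the norm of the orthogonal projection of v onto the orthogonal complement of W equals ‖v ∧ w₁ ∧ ⋯ ∧ w_k‖ / ‖w₁ ∧ ⋯ ∧ w_k‖, where the norms on exterior powers are those induced by the inner product. -/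
/-!
By `exteriorPower.inner_ιMulti_self` the Gram determinants are the squared norms of
`v ∧ w₁ ∧ ⋯ ∧ w_k` and `w₁ ∧ ⋯ ∧ w_k`. Write `v = p + q` with `p ∈ W` and `q ⊥ W`. Since `p`
depends linearly on the `wᵢ`, the summand `p ∧ w₁ ∧ ⋯ ∧ w_k` vanishes, and since `q ⊥ wᵢ` the
Gram matrix of `(q, w₁, …, w_k)` is block diagonal, so
`‖v ∧ w₁ ∧ ⋯ ∧ w_k‖ = ‖q ∧ w₁ ∧ ⋯ ∧ w_k‖ = ‖q‖ ‖w₁ ∧ ⋯ ∧ w_k‖`.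
-/

open scoped RealInnerProductSpace

/-- The Gram determinant `det (⟪u i, u' j⟫)`, which computes the inner product of the
wedge products `u 0 ∧ ⋯ ∧ u (m-1)` and `u' 0 ∧ ⋯ ∧ u' (m-1)` for the inner product
induced on the exterior power. -/
noncomputable def gramDet {V : Type*} [NormedAddCommGroup V] [InnerProductSpace ℝ V]
    {m : ℕ} (u u' : Fin m → V) : ℝ :=
  (Matrix.of fun i j => (⟪u i, u' j⟫ : ℝ)).det

open Matrix exteriorPower

theorem AlternatingMap.map_cons_add_of_mem_span {K M N : Type*} [Field K] [AddCommGroup M]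
    [Module K M] [AddCommGroup N] [Module K N] {k : ℕ} (f : M [⋀^Fin (k + 1)]→ₗ[K] N)
    {w : Fin k → M} {p : M} (hp : p ∈ Submodule.span K (Set.range w)) (x : M) :
    f (Fin.cons (x + p) w) = f (Fin.cons x w) := by
  have hdep : ¬LinearIndependent K (Fin.cons p w : Fin (k + 1) → M) := by
    rw [linearIndependent_finCons]
    exact fun h => h.2 hp
  rw [← f.coe_multilinearMap, MultilinearMap.cons_add, f.coe_multilinearMap,
    f.map_linearDependent _ hdep, add_zero]

theorem Matrix.det_gram_cons_of_forall_inner_eq_zero {V : Type*} [NormedAddCommGroup V]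
    [InnerProductSpace ℝ V] {k : ℕ} {q : V} {w : Fin k → V} (h : ∀ i, ⟪q, w i⟫ = 0) :
    (gram ℝ (Fin.cons q w : Fin (k + 1) → V)).det = ‖q‖ ^ 2 * (gram ℝ w).det := by
  rw [det_succ_row_zero, Finset.sum_eq_single 0]
  · have hsub : (gram ℝ (Fin.cons q w)).submatrix Fin.succ Fin.succ = gram ℝ w := rfl
    simp [hsub]
  · intro j _ hj
    obtain ⟨j, rfl⟩ := Fin.exists_succ_eq.mpr hj
    simp [h]
  · simp

namespace exteriorPower

variable {V : Type*} [NormedAddCommGroup V] [InnerProductSpace ℝ V] [FiniteDimensional ℝ V]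

theorem norm_ιMulti_sq {m : ℕ} (u : Fin m → V) :
    ‖ιMulti ℝ m u‖ ^ 2 = (gram ℝ u).det := by
  rw [← real_inner_self_eq_norm_sq, inner_ιMulti_self]

theorem norm_ιMulti_ne_zero_of_linearIndependent {m : ℕ} {u : Fin m → V}
    (hu : LinearIndependent ℝ u) : ‖ιMulti ℝ m u‖ ≠ 0 := by
  rw [← pow_ne_zero_iff two_ne_zero, norm_ιMulti_sq]
  exact det_gram_ne_zero_iff_linearIndependent.mpr hu

theorem norm_ιMulti_cons_of_forall_inner_eq_zero {k : ℕ} {q : V} {w : Fin k → V}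
    (h : ∀ i, ⟪q, w i⟫ = 0) :
    ‖ιMulti ℝ (k + 1) (Fin.cons q w)‖ = ‖q‖ * ‖ιMulti ℝ k w‖ := by
  rw [← sq_eq_sq₀ (norm_nonneg _) (by positivity), mul_pow, norm_ιMulti_sq, norm_ιMulti_sq,
    det_gram_cons_of_forall_inner_eq_zero h]

end exteriorPower

theorem sqrt_gramDet_self {V : Type*} [NormedAddCommGroup V] [InnerProductSpace ℝ V]
    [FiniteDimensional ℝ V] {m : ℕ} (u : Fin m → V) :
    √(gramDet u u) = ‖ιMulti ℝ m u‖ := by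
  rw [show gramDet u u = (gram ℝ u).det from rfl, ← norm_ιMulti_sq, Real.sqrt_sq (norm_nonneg _)]

theorem stmt_4 {V : Type*} [NormedAddCommGroup V] [InnerProductSpace ℝ V]
    [FiniteDimensional ℝ V] {k : ℕ} (w : Fin k → V) (hw : LinearIndependent ℝ w)
    (W : Submodule ℝ V) (hW : W = Submodule.span ℝ (Set.range w)) (v : V) :
    ‖(Submodule.orthogonalProjectionOnto Wᗮ v : V)‖
      = Real.sqrt (gramDet (Fin.cons v w) (Fin.cons v w)) / Real.sqrt (gramDet w w) := by
  set q : V := ↑(Submodule.orthogonalProjectionOnto Wᗮ v)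
  have hq : ∀ i, ⟪q, w i⟫ = 0 := fun i =>
    Submodule.inner_left_of_mem_orthogonal (hW ▸ Submodule.subset_span ⟨i, rfl⟩)
      (SetLike.coe_mem _)
  have hv : q + W.starProjection v = v := by
    rw [add_comm]
    exact W.starProjection_add_starProjection_orthogonal v
  have hp : W.starProjection v ∈ Submodule.span ℝ (Set.range w) := hW ▸ SetLike.coe_mem _
  rw [sqrt_gramDet_self, sqrt_gramDet_self, ← hv, (ιMulti ℝ (k + 1)).map_cons_add_of_mem_span hp,
    norm_ιMulti_cons_of_forall_inner_eq_zero hq,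
    mul_div_cancel_right₀ _ (norm_ιMulti_ne_zero_of_linearIndependent hw)]
end

section
/- Let V be a finite-dimensional real inner product space, w₁,…,w_k ∈ V linearly independent with W = span(w_i), and v₁, v₂ ∈ V. Then ⟨pr_{W⊥}(v₁), pr_{W⊥}(v₂)⟩ = ⟨v₁ ∧ w₁ ∧ ⋯ ∧ w_k, v₂ ∧ w₁ ∧ ⋯ ∧ w_k⟩ / ‖w₁ ∧ ⋯ ∧ w_k‖², where pr_{W⊥} denotes orthogonal projection onto the orthogonal complement of W. -/
/-!
Replacing `v` by `v - p` with `p ∈ W` in the first slot of the Gram determinant is a row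
(or column) operation, so both `vᵢ` may be replaced by their components `qᵢ` in `Wᗮ`. The first
row of the resulting Gram matrix is then `(⟪q₁, q₂⟫, 0, …, 0)`, and expanding along it gives
`⟪q₁, q₂⟫ · gramDet w w`, where `gramDet w w ≠ 0` by linear independence.
-/

open scoped RealInnerProductSpace

section GramDet

variable {V : Type*} [NormedAddCommGroup V] [InnerProductSpace ℝ V] {k : ℕ}

theorem gramDet_comm (u u' : Fin k → V) : gramDet u u' = gramDet u' u := by
  rw [gramDet, ← Matrix.det_transpose]
  congr 1
  ext i j
  exact real_inner_comm _ _

theorem gramDet_self_ne_zero {w : Fin k → V} (hw : LinearIndependent ℝ w) : gramDet w w ≠ 0 :=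
  Matrix.det_gram_ne_zero_iff_linearIndependent.2 hw

theorem gramDet_cons_left_eq_of_sub_mem_span {w : Fin k → V} {x y : V}
    (hxy : x - y ∈ Submodule.span ℝ (Set.range w)) (u' : Fin (k + 1) → V) :
    gramDet (Fin.cons x w) u' = gramDet (Fin.cons y w) u' := by
  obtain ⟨c, hc⟩ := (Submodule.mem_span_range_iff_exists_fun ℝ).1 hxy
  set A : Matrix (Fin (k + 1)) (Fin (k + 1)) ℝ :=
    .of fun i j => ⟪(Fin.cons y w : Fin (k + 1) → V) i, u' j⟫
  have hrow : (Matrix.of fun i j => ⟪(Fin.cons x w : Fin (k + 1) → V) i, u' j⟫) =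
      A.updateRow 0 (A 0 + ∑ i, (Fin.cons 0 c : Fin (k + 1) → ℝ) i • A i) := by
    ext i j
    induction i using Fin.cases with
    | zero =>
      rw [← sub_add_cancel x y, ← hc]
      simp [A, Fin.sum_univ_succ, sum_inner, inner_add_left, inner_smul_left, add_comm]
    | succ i => simp [A, Fin.succ_ne_zero]
  rw [gramDet, hrow, Matrix.det_updateRow_add, Matrix.updateRow_eq_self,
    Matrix.det_updateRow_sum]
  simp [gramDet, A]

theorem gramDet_cons_right_eq_of_sub_mem_span {w : Fin k → V} {x y : V}
    (hxy : x - y ∈ Submodule.span ℝ (Set.range w)) (u : Fin (k + 1) → V) :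
    gramDet u (Fin.cons x w) = gramDet u (Fin.cons y w) := by
  rw [gramDet_comm, gramDet_cons_left_eq_of_sub_mem_span hxy, gramDet_comm]

theorem gramDet_cons_cons_of_forall_inner_eq_zero {w : Fin k → V} {x : V}
    (hx : ∀ i, ⟪x, w i⟫ = 0) (y : V) :
    gramDet (Fin.cons x w) (Fin.cons y w) = ⟪x, y⟫ * gramDet w w := by
  rw [gramDet, Matrix.det_succ_row_zero, Fin.sum_univ_succ]
  simp [hx, gramDet, Matrix.submatrix]

end GramDet

theorem stmt_5 {V : Type*} [NormedAddCommGroup V] [InnerProductSpace ℝ V]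
    [FiniteDimensional ℝ V] {k : ℕ} (w : Fin k → V) (hw : LinearIndependent ℝ w)
    (W : Submodule ℝ V) (hW : W = Submodule.span ℝ (Set.range w)) (v₁ v₂ : V) :
    (⟪(Submodule.orthogonalProjectionOnto Wᗮ v₁ : V), (Submodule.orthogonalProjectionOnto Wᗮ v₂ : V)⟫ : ℝ)
      = gramDet (Fin.cons v₁ w) (Fin.cons v₂ w) / gramDet w w := by
  have hsub (v : V) :
      v - (Wᗮ.orthogonalProjectionOnto v : V) ∈ Submodule.span ℝ (Set.range w) := by
    rw [← hW, Submodule.orthogonalProjectionOnto_orthogonal, sub_sub_cancel]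
    exact (W.orthogonalProjectionOnto v).2
  have hperp (i : Fin k) : ⟪(Wᗮ.orthogonalProjectionOnto v₁ : V), w i⟫ = 0 :=
    Submodule.inner_left_of_mem_orthogonal (hW ▸ Submodule.subset_span ⟨i, rfl⟩)
      (Wᗮ.orthogonalProjectionOnto v₁).2
  rw [gramDet_cons_left_eq_of_sub_mem_span (hsub v₁),
    gramDet_cons_right_eq_of_sub_mem_span (hsub v₂),
    gramDet_cons_cons_of_forall_inner_eq_zero hperp,
    mul_div_cancel_right₀ _ (gramDet_self_ne_zero hw)]
end

section
/- Let V be a finite-dimensional real inner product space, w₁,…,w_k ∈ V linearly independent with W = span(w_i), and v ∈ V. Then the i-th coefficient of the orthogonal projection pr_W(v) in the basis (w₁,…,w_k) equals ⟨w₁ ∧ ⋯ ∧ w_{i-1} ∧ v ∧ w_{i+1} ∧ ⋯ ∧ w_k, w₁ ∧ ⋯ ∧ w_k⟩ / ‖w₁ ∧ ⋯ ∧ w_k‖² (i.e., with w_i replaced by v in the i-th slot). -/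
/-!
Orthogonality of `v - pr_W v` to `W` means that replacing `w i` by `v` or by
`pr_W v = ∑ c j • w j` does not change the Gram determinant against `w`. After that
replacement the `i`-th row of the Gram matrix is `∑ c j • (row j)`, so by multilinearity
and the alternating property of the determinant only the term `c i • (row i)` survives.
Linear independence of the `w j` makes the Gram determinant nonzero.
-/

open scoped RealInnerProductSpace

open Matrix

section GramDet

variable {V : Type*} [NormedAddCommGroup V] [InnerProductSpace ℝ V] {m : ℕ}

theorem gramDet_self_ne_zero_s6 {u : Fin m → V} (hu : LinearIndependent ℝ u) : gramDet u u ≠ 0 :=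
  det_gram_ne_zero_iff_linearIndependent.mpr hu

theorem gramDet_update_left (u u' : Fin m → V) (i : Fin m) (x : V) :
    gramDet (Function.update u i x) u' =
      ((of fun a b => ⟪u a, u' b⟫).updateRow i fun b => ⟪x, u' b⟫).det := by
  unfold gramDet
  congr 1
  ext a b
  rcases eq_or_ne a i with rfl | ha
  · simp
  · simp [ha]

theorem gramDet_update_left_congr (u u' : Fin m → V) (i : Fin m) {x y : V}
    (h : ∀ j, ⟪x, u' j⟫ = ⟪y, u' j⟫) :
    gramDet (Function.update u i x) u' = gramDet (Function.update u i y) u' := by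
  simp only [gramDet_update_left, h]

theorem gramDet_update_left_sum_smul (u u' : Fin m → V) (i : Fin m) (c : Fin m → ℝ) :
    gramDet (Function.update u i (∑ l, c l • u l)) u' = c i * gramDet u u' := by
  have hrow : (fun b => ⟪∑ l, c l • u l, u' b⟫) = ∑ l, c l • (of fun a b => ⟪u a, u' b⟫) l := by
    ext b
    simp [sum_inner, real_inner_smul_left]
  rw [gramDet_update_left, hrow, det_updateRow_sum, smul_eq_mul, gramDet]

end GramDet

theorem stmt_6 {V : Type*} [NormedAddCommGroup V] [InnerProductSpace ℝ V]
    [FiniteDimensional ℝ V] {k : ℕ} (w : Fin k → V) (hw : LinearIndependent ℝ w)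
    (W : Submodule ℝ V) (hW : W = Submodule.span ℝ (Set.range w)) (v : V)
    (c : Fin k → ℝ) (hc : (W.orthogonalProjection v : V) = ∑ j, c j • w j) (i : Fin k) :
    c i = gramDet (Function.update w i v) w / gramDet w w := by
  have hmem : ∀ j, w j ∈ W := fun j => hW ▸ Submodule.subset_span ⟨j, rfl⟩
  have hinner : ∀ j, ⟪v, w j⟫ = ⟪∑ l, c l • w l, w j⟫ := fun j => by
    rw [← hc]
    exact (W.inner_orthogonalProjectionOnto_eq_of_mem_right ⟨w j, hmem j⟩ v).symm
  rw [gramDet_update_left_congr w w i hinner, gramDet_update_left_sum_smul,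
    mul_div_cancel_right₀ _ (gramDet_self_ne_zero_s6 hw)]
end

section
/- Let k ∈ SO(3) be such that both k⁻¹ H k and k⁻¹ H' k have all diagonal entries zero, where H and H' are traceless real diagonal 3×3 matrices. Then H and H' are linearly dependent. -/
open Matrix


set_option maxHeartbeats 1000000 in
theorem stmt_8 (k : Matrix (Fin 3) (Fin 3) ℝ) (hk : kᵀ * k = 1) (hdet : k.det = 1)
    (d d' : Fin 3 → ℝ) (htr : d 0 + d 1 + d 2 = 0) (htr' : d' 0 + d' 1 + d' 2 = 0)
    (H : Matrix (Fin 3) (Fin 3) ℝ) (H' : Matrix (Fin 3) (Fin 3) ℝ)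
    (hH : H = Matrix.diagonal d) (hH' : H' = Matrix.diagonal d')
    (hzero : ∀ i, (k⁻¹ * H * k) i i = 0)
    (hzero' : ∀ i, (k⁻¹ * H' * k) i i = 0) :
    ¬ LinearIndependent ℝ ![H, H'] := by
  intro hLI
  rw [Fintype.linearIndependent_iff] at hLI
  -- a general way to derive a contradiction from a dependence relation
  have hdep : ∀ a b : ℝ, (a ≠ 0 ∨ b ≠ 0) →
      (∀ j, a * d j + b * d' j = 0) → False := by
    intro a b hab hrel
    have hsum : ∑ i : Fin 2, (![a, b]) i • (![H, H']) i = 0 := by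
      simp only [Fin.sum_univ_two, Matrix.cons_val_zero, Matrix.cons_val_one, Matrix.head_cons]
      rw [hH, hH']
      ext i j
      rcases eq_or_ne i j with rfl | hij
      · simpa [Matrix.diagonal] using hrel i
      · simp [Matrix.diagonal_apply_ne _ hij]
    have := hLI ![a, b] hsum
    rcases hab with ha | hb
    · exact ha (this 0)
    · exact hb (this 1)
  set δ : ℝ := d 0 * d' 1 - d 1 * d' 0 with hδdef
  -- δ must be nonzero, else we get a dependence relation
  have hδ : δ ≠ 0 := by
    intro h0
    rw [hδdef] at h0
    rcases eq_or_ne (d 0) 0 with hd0 | hd0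
    · rcases eq_or_ne (d 1) 0 with hd1 | hd1
      · -- d = 0
        have q0 : (1:ℝ) * d 0 + 0 * d' 0 = 0 := by linear_combination hd0
        have q1 : (1:ℝ) * d 1 + 0 * d' 1 = 0 := by linear_combination hd1
        have q2 : (1:ℝ) * d 2 + 0 * d' 2 = 0 := by linear_combination htr - hd0 - hd1
        exact hdep 1 0 (Or.inl one_ne_zero) (fun j => by fin_cases j <;> assumption)
      · have q0 : -d' 1 * d 0 + d 1 * d' 0 = 0 := by linear_combination -h0
        have q1 : -d' 1 * d 1 + d 1 * d' 1 = 0 := by ring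
        have q2 : -d' 1 * d 2 + d 1 * d' 2 = 0 := by
          linear_combination h0 - d' 1 * htr + d 1 * htr'
        exact hdep (-d' 1) (d 1) (Or.inr hd1) (fun j => by fin_cases j <;> assumption)
    · have q0 : -d' 0 * d 0 + d 0 * d' 0 = 0 := by ring
      have q1 : -d' 0 * d 1 + d 0 * d' 1 = 0 := by linear_combination h0
      have q2 : -d' 0 * d 2 + d 0 * d' 2 = 0 := by
        linear_combination -h0 - d' 0 * htr + d 0 * htr'
      exact hdep (-d' 0) (d 0) (Or.inr hd0) (fun j => by fin_cases j <;> assumption)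
  -- Now derive that every entry of k squares to 1/3
  have hkinv : k⁻¹ = kᵀ := Matrix.inv_eq_left_inv hk
  rw [hkinv, hH] at hzero
  rw [hkinv, hH'] at hzero'
  have hsq : ∀ a i : Fin 3, k a i ^ 2 = 1 / 3 := by
    intro a i
    have h1 := hzero i
    have h2 := hzero' i
    simp [Matrix.mul_apply, Matrix.diagonal, Fin.sum_univ_three] at h1 h2
    have hn := congrFun (congrFun hk i) i
    simp [Matrix.mul_apply, Fin.sum_univ_three, Matrix.one_apply] at hn
    -- set y j = k j i ^ 2 - 1/3 ; show y = 0
    have e3 : (k 0 i ^ 2 - 1/3) + (k 1 i ^ 2 - 1/3) + (k 2 i ^ 2 - 1/3) = 0 := by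
      linarith [hn, sq_nonneg (k 0 i)]

    have e1 : d 0 * (k 0 i ^ 2 - 1/3) + d 1 * (k 1 i ^ 2 - 1/3) + d 2 * (k 2 i ^ 2 - 1/3) = 0 := by
      nlinarith [h1, htr]
    have e2 : d' 0 * (k 0 i ^ 2 - 1/3) + d' 1 * (k 1 i ^ 2 - 1/3) + d' 2 * (k 2 i ^ 2 - 1/3) = 0 := by
      nlinarith [h2, htr']
    -- eliminate using trace relations
    have f1 : d 0 * ((k 0 i ^ 2 - 1/3) - (k 2 i ^ 2 - 1/3))
        + d 1 * ((k 1 i ^ 2 - 1/3) - (k 2 i ^ 2 - 1/3)) = 0 := by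
      have hd2 : d 2 = -(d 0 + d 1) := by linarith
      nlinarith [e1, hd2]
    have f2 : d' 0 * ((k 0 i ^ 2 - 1/3) - (k 2 i ^ 2 - 1/3))
        + d' 1 * ((k 1 i ^ 2 - 1/3) - (k 2 i ^ 2 - 1/3)) = 0 := by
      have hd2 : d' 2 = -(d' 0 + d' 1) := by linarith
      nlinarith [e2, hd2]
    have g1 : δ * ((k 0 i ^ 2 - 1/3) - (k 2 i ^ 2 - 1/3)) = 0 := by
      rw [hδdef]; linear_combination d' 1 * f1 - d 1 * f2
    have g2 : δ * ((k 1 i ^ 2 - 1/3) - (k 2 i ^ 2 - 1/3)) = 0 := by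
      rw [hδdef]; linear_combination d 0 * f2 - d' 0 * f1
    have y02 : (k 0 i ^ 2 - 1/3) - (k 2 i ^ 2 - 1/3) = 0 :=
      (mul_eq_zero.mp g1).resolve_left hδ
    have y12 : (k 1 i ^ 2 - 1/3) - (k 2 i ^ 2 - 1/3) = 0 :=
      (mul_eq_zero.mp g2).resolve_left hδ
    fin_cases a <;> simp <;> linarith [e3, y02, y12]
  -- orthogonality of columns 0 and 1 gives the final contradiction
  have ho := congrFun (congrFun hk 0) 1
  simp [Matrix.mul_apply, Fin.sum_univ_three, Matrix.one_apply] at ho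
  have ht : ∀ a : Fin 3, k a 0 * k a 1 = 1/3 ∨ k a 0 * k a 1 = -(1/3) := by
    intro a
    have hsq0 := hsq a 0
    have hsq1 := hsq a 1
    have : (k a 0 * k a 1) ^ 2 = (1/3 : ℝ) ^ 2 := by
      rw [mul_pow, hsq0, hsq1]; norm_num
    rcases sq_eq_sq_iff_eq_or_eq_neg.mp this with h | h
    · exact Or.inl h
    · exact Or.inr h
  rcases ht 0 with h0 | h0 <;> rcases ht 1 with h1 | h1 <;> rcases ht 2 with h2 | h2 <;>
    linarith [ho]
end

section
/- Let Σ be an irreducible root system in a Euclidean space of rank r with a choice of simple roots Π, and let α ∈ Π. Then there exist at least r roots β ∈ Σ with β ≥ α, where β ≥ α means β − α is a nonnegative integer combination of simple roots. -/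
open scoped RealInnerProductSpace

theorem stmt_9 (r : ℕ) (S Pi : Finset (EuclideanSpace ℝ (Fin r)))
    -- `S` is a (reduced, crystallographic) root system; we record the properties used.
    (hzero : (0 : EuclideanSpace ℝ (Fin r)) ∉ S)
    (hneg : ∀ β ∈ S, -β ∈ S)
    (hsum : ∀ β ∈ S, ∀ γ ∈ S, (⟪β, γ⟫ : ℝ) < 0 → β + γ ≠ 0 → β + γ ∈ S)
    -- `Pi` is a set of simple roots for `S`:
    (hPiS : Pi ⊆ S)
    (hindep : LinearIndependent ℝ (Subtype.val : {x // x ∈ Pi} → EuclideanSpace ℝ (Fin r)))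
    (hcard : Pi.card = r)
    (hdecomp : ∀ β ∈ S, (∃ n : EuclideanSpace ℝ (Fin r) → ℕ,
        β = ∑ γ ∈ Pi, (n γ : ℝ) • γ) ∨ (∃ n : EuclideanSpace ℝ (Fin r) → ℕ,
        -β = ∑ γ ∈ Pi, (n γ : ℝ) • γ))
    (hnonpos : ∀ γ ∈ Pi, ∀ δ ∈ Pi, γ ≠ δ → (⟪γ, δ⟫ : ℝ) ≤ 0)
    -- irreducibility: the simple roots cannot be split into two nonempty orthogonal parts
    (hirr : ¬ ∃ S₁ S₂ : Set (EuclideanSpace ℝ (Fin r)),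
        S₁ ∪ S₂ = (Pi : Set (EuclideanSpace ℝ (Fin r))) ∧ S₁.Nonempty ∧ S₂.Nonempty ∧
        S₁ ∩ S₂ = ∅ ∧ ∀ x ∈ S₁, ∀ y ∈ S₂, (⟪x, y⟫ : ℝ) = 0)
    (α : EuclideanSpace ℝ (Fin r)) (hα : α ∈ Pi) :
    r ≤ {β ∈ (S : Set (EuclideanSpace ℝ (Fin r))) |
          ∃ n : EuclideanSpace ℝ (Fin r) → ℕ,
            β = α + ∑ γ ∈ Pi, (n γ : ℝ) • γ}.ncard := by
  classical
  -- indicator sums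
  have hind : ∀ U : Finset (EuclideanSpace ℝ (Fin r)), U ⊆ Pi →
      ∑ γ ∈ Pi, (if γ ∈ U then (1:ℝ) else 0) • γ = ∑ γ ∈ U, γ := by
    intro U hU
    simp only [ite_smul, one_smul, zero_smul]
    rw [← Finset.sum_filter, Finset.filter_mem_eq_inter, Finset.inter_eq_right.mpr hU]
  -- sums over distinct subsets of Pi are distinct
  have hinj : ∀ U U' : Finset (EuclideanSpace ℝ (Fin r)), U ⊆ Pi → U' ⊆ Pi →
      (∑ γ ∈ U, γ) = ∑ γ ∈ U', γ → U = U' := by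
    intro U U' hU hU' h
    have hli := Fintype.linearIndependent_iff.mp hindep
    have key := hli (fun i => (if ↑i ∈ U then (1:ℝ) else 0) - (if ↑i ∈ U' then 1 else 0)) ?_
    · ext γ
      by_cases hγ : γ ∈ Pi
      · have hk := key ⟨γ, hγ⟩
        simp only [sub_eq_zero] at hk
        constructor <;> intro hm
        · by_contra hm'
          simp [hm, hm'] at hk
        · by_contra hm'
          simp [hm, hm'] at hk
      · constructor <;> intro hm
        · exact absurd (hU hm) hγ
        · exact absurd (hU' hm) hγ
    · simp only [sub_smul, Finset.sum_sub_distrib]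
      rw [Finset.sum_coe_sort Pi (fun γ => (if γ ∈ U then (1:ℝ) else 0) • γ),
        Finset.sum_coe_sort Pi (fun γ => (if γ ∈ U' then (1:ℝ) else 0) • γ),
        hind U hU, hind U' hU', h, sub_self]
  -- chain of connected subsets
  have hchain : ∀ k, k < r → ∃ T : Finset (EuclideanSpace ℝ (Fin r)),
      T ⊆ Pi ∧ α ∈ T ∧ T.card = k + 1 ∧ (∑ γ ∈ T, γ) ∈ S := by
    intro k
    induction k with
    | zero =>
      intro _
      exact ⟨{α}, by simpa using hα, Finset.mem_singleton_self α, Finset.card_singleton α,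
        by simpa using hPiS hα⟩
    | succ k ih =>
      intro hk
      obtain ⟨T, hTPi, hαT, hTcard, hTS⟩ := ih (Nat.lt_of_succ_lt hk)
      have hTlt : T.card < Pi.card := by rw [hTcard, hcard]; omega
      have hss : T ⊂ Pi := Finset.ssubset_iff_subset_ne.mpr ⟨hTPi, fun h => by simp [h] at hTlt⟩
      obtain ⟨w, hwPi, hwT⟩ := Finset.exists_of_ssubset hss
      push_neg at hirr
      obtain ⟨x, hx, y, hy, hxy⟩ := hirr ↑T ((↑Pi : Set (EuclideanSpace ℝ (Fin r))) \ ↑T)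
        (Set.union_diff_cancel (by exact_mod_cast hTPi)) ⟨α, by exact_mod_cast hαT⟩
        ⟨w, by exact_mod_cast hwPi, by exact_mod_cast hwT⟩
        (by ext z; simp)
      have hxT : x ∈ T := by exact_mod_cast hx
      obtain ⟨hy1, hy2⟩ := hy
      have hyPi : y ∈ Pi := by exact_mod_cast hy1
      have hyT : y ∉ T := by exact_mod_cast hy2
      have hxylt : (⟪x, y⟫ : ℝ) < 0 :=
        lt_of_le_of_ne (hnonpos x (hTPi hxT) y hyPi (fun h => hyT (h ▸ hxT))) hxy
      have hinner : (⟪∑ γ ∈ T, γ, y⟫ : ℝ) < 0 := by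
        rw [sum_inner]
        have : ∑ γ ∈ T, (⟪γ, y⟫ : ℝ) < ∑ γ ∈ T, (0:ℝ) := by
          refine Finset.sum_lt_sum (fun γ hγ => hnonpos γ (hTPi hγ) y hyPi
            (fun h => hyT (h ▸ hγ))) ⟨x, hxT, hxylt⟩
        simpa using this
      have hsumins : (∑ γ ∈ T, γ) + y = ∑ γ ∈ insert y T, γ := by
        rw [Finset.sum_insert hyT, add_comm]
      have hne0 : (∑ γ ∈ T, γ) + y ≠ 0 := by
        intro h0
        have : insert y T = (∅ : Finset (EuclideanSpace ℝ (Fin r))) := by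
          refine hinj _ _ (Finset.insert_subset hyPi hTPi) (Finset.empty_subset _) ?_
          rw [← hsumins, h0, Finset.sum_empty]
        simp at this
      refine ⟨insert y T, Finset.insert_subset hyPi hTPi, Finset.mem_insert_of_mem hαT, ?_, ?_⟩
      · rw [Finset.card_insert_of_notMem hyT, hTcard]
      · rw [← hsumins]
        exact hsum _ hTS y (hPiS hyPi) hinner hne0
  -- build r distinct roots
  set T : ℕ → Finset (EuclideanSpace ℝ (Fin r)) :=
    fun k => if h : k < r then (hchain k h).choose else ∅ with hT
  have hTspec : ∀ k (h : k < r), T k ⊆ Pi ∧ α ∈ T k ∧ (T k).card = k + 1 ∧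
      (∑ γ ∈ T k, γ) ∈ S := by
    intro k h
    simp only [hT, dif_pos h]
    exact (hchain k h).choose_spec
  set β : ℕ → EuclideanSpace ℝ (Fin r) := fun k => ∑ γ ∈ T k, γ with hβ
  set A : Set (EuclideanSpace ℝ (Fin r)) :=
    {β ∈ (S : Set (EuclideanSpace ℝ (Fin r))) |
          ∃ n : EuclideanSpace ℝ (Fin r) → ℕ,
            β = α + ∑ γ ∈ Pi, (n γ : ℝ) • γ} with hA
  have hmem : ∀ k, k < r → β k ∈ A := by
    intro k hk
    obtain ⟨hsub, hαk, hck, hSk⟩ := hTspec k hk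
    refine ⟨by exact_mod_cast hSk, fun γ => if γ ∈ (T k).erase α then 1 else 0, ?_⟩
    have hcast : ∀ γ : EuclideanSpace ℝ (Fin r),
        ((if γ ∈ (T k).erase α then (1:ℕ) else 0 : ℕ) : ℝ)
          = if γ ∈ (T k).erase α then (1:ℝ) else 0 := by
      intro γ; split <;> simp
    simp only [hcast]
    rw [hind ((T k).erase α) ((Finset.erase_subset α (T k)).trans hsub)]
    rw [show α + ∑ γ ∈ (T k).erase α, γ = ∑ γ ∈ T k, γ from
      Finset.add_sum_erase (T k) (fun γ => γ) hαk]
  have hβinj : Set.InjOn β ↑(Finset.range r) := by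
    intro k hk k' hk' h
    simp only [Finset.coe_range, Set.mem_Iio] at hk hk'
    have e := hinj (T k) (T k') (hTspec k hk).1 (hTspec k' hk').1 h
    have := (hTspec k hk).2.2.1
    rw [e, (hTspec k' hk').2.2.1] at this
    omega
  have hsubF : ↑((Finset.range r).image β) ⊆ A := by
    intro z hz
    simp only [Finset.coe_image, Set.mem_image, Finset.coe_range, Set.mem_Iio] at hz
    obtain ⟨k, hk, rfl⟩ := hz
    exact hmem k hk
  have hAfin : A.Finite := S.finite_toSet.subset (fun z hz => hz.1)
  calc r = ((Finset.range r).image β).card := by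
        rw [Finset.card_image_of_injOn hβinj, Finset.card_range]
    _ = (↑((Finset.range r).image β) : Set (EuclideanSpace ℝ (Fin r))).ncard :=
        (Set.ncard_coe_finset _).symm
    _ ≤ A.ncard := Set.ncard_le_ncard hsubF hAfin
end

section
/- Let G = SL(2,ℝ) with the standard Iwasawa decomposition (N upper unipotent, A positive diagonal, K = SO(2)). Then for every g ∈ G, the set {n(ga) : a ∈ A} ⊂ N of N-projections along the right A-orbit of g is bounded: the (1,2)-entry x of n(ga) satisfies a bound independent of a ∈ A. -/
/-!
Writing `g = [[a, b], [c, d]]`, the entry is `(a c y² + b d y⁻²) / (c² y² + d² y⁻²)`, a weighted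
average of `a / c` and `b / d` with the nonnegative weights `(c y)²` and `(d y⁻¹)²`. Hence its absolute
value is at most `|a / c| + |b / d|`, whatever `y` is.
-/

-- Also true for `c = 0`, where both sides vanish since `a / 0 = 0`.
lemma abs_mul_le_abs_div_mul_sq (a c : ℝ) : |a * c| ≤ |a / c| * c ^ 2 := by
  rcases eq_or_ne c 0 with rfl | hc
  · simp
  · rw [abs_div, ← sq_abs c, abs_mul]
    field_simp
    rfl

lemma abs_weighted_average_le (a b c d y z : ℝ) :
    |(a * y * (c * y) + b * z * (d * z)) / ((c * y) ^ 2 + (d * z) ^ 2)| ≤ |a / c| + |b / d| := by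
  have hnum : |a * y * (c * y) + b * z * (d * z)|
      ≤ (|a / c| + |b / d|) * ((c * y) ^ 2 + (d * z) ^ 2) :=
    calc |a * y * (c * y) + b * z * (d * z)|
        ≤ |a * c| * y ^ 2 + |b * d| * z ^ 2 := by
          refine (abs_add_le _ _).trans_eq ?_
          rw [show a * y * (c * y) = a * c * y ^ 2 by ring,
            show b * z * (d * z) = b * d * z ^ 2 by ring, abs_mul, abs_mul (b * d),
            abs_of_nonneg (sq_nonneg y), abs_of_nonneg (sq_nonneg z)]
      _ ≤ |a / c| * c ^ 2 * y ^ 2 + |b / d| * d ^ 2 * z ^ 2 := by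
          gcongr
          · exact abs_mul_le_abs_div_mul_sq a c
          · exact abs_mul_le_abs_div_mul_sq b d
      _ = (|a / c| + |b / d|) * ((c * y) ^ 2 + (d * z) ^ 2)
            - (|a / c| * (d * z) ^ 2 + |b / d| * (c * y) ^ 2) := by ring
      _ ≤ (|a / c| + |b / d|) * ((c * y) ^ 2 + (d * z) ^ 2) := by
          apply sub_le_self
          positivity
  rw [abs_div, abs_of_nonneg (by positivity : (0 : ℝ) ≤ (c * y) ^ 2 + (d * z) ^ 2)]
  exact div_le_of_le_mul₀ (by positivity) (by positivity) hnum

/-- For `g ∈ SL(2,ℝ)` with rows `v, w` and `a = diag(y, 1/y)`, the Iwasawa `N`-projection of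
`g * a` (with respect to the standard Iwasawa decomposition `N A K`) is the upper unipotent
matrix whose `(1,2)`-entry is `⟨v a, w a⟩ / ⟨w a, w a⟩`. This entry is bounded uniformly
in `a ∈ A`. -/
theorem stmt_12 (g : Matrix.SpecialLinearGroup (Fin 2) ℝ) :
    ∃ C : ℝ, ∀ y : ℝ, 0 < y →
      |((g : Matrix (Fin 2) (Fin 2) ℝ) 0 0 * y * ((g : Matrix (Fin 2) (Fin 2) ℝ) 1 0 * y)
          + (g : Matrix (Fin 2) (Fin 2) ℝ) 0 1 * y⁻¹ * ((g : Matrix (Fin 2) (Fin 2) ℝ) 1 1 * y⁻¹))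
        / (((g : Matrix (Fin 2) (Fin 2) ℝ) 1 0 * y) ^ 2
          + ((g : Matrix (Fin 2) (Fin 2) ℝ) 1 1 * y⁻¹) ^ 2)| ≤ C :=
  ⟨_, fun y _ => abs_weighted_average_le _ _ _ _ y y⁻¹⟩
end

section
/- Let G = SL(3,ℝ), H₀ = diag(a,b,c) traceless. Then there exists k ∈ SO(3) such that k⁻¹ H₀ k has all diagonal entries equal to zero. -/
/-!
Among `a, b, c` some cyclically adjacent pair, say `a, b`, has `a * b ≤ 0`: otherwise
`ab + bc + ca > 0`, contradicting `0 = (a + b + c)² ≥ 2 (ab + bc + ca)`. By the intermediate value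
theorem there is `θ` with `a cos²θ + b sin²θ = 0`, so conjugating `diag(a, b, c)` by the rotation
through `θ` in the `(e₁, e₂)`-plane kills the first diagonal entry and leaves `-c, c` on the other
two; a further rotation through `π / 4` in the `(e₂, e₃)`-plane averages these to `0`. The other
two cases reduce to this one by a cyclic, hence even, relabelling of the coordinates.
-/

open Matrix Real

section ZeroDiagConj

variable {n : Type*} [Fintype n] [DecidableEq n]

/-- The set `𝒞(SL(n, ℝ), A)`, with `kᵀ` in place of `k⁻¹` since `k ∈ SO(n)`. -/
def zeroDiagConjSet (A : Matrix n n ℝ) : Set (Matrix n n ℝ) :=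
  {k | k ∈ specialOrthogonalGroup n ℝ ∧ ∀ i, (kᵀ * A * k) i i = 0}

theorem transpose_mul_diagonal_mul_apply_self {R : Type*} [CommSemiring R]
    (k : Matrix n n R) (d : n → R) (i : n) :
    (kᵀ * diagonal d * k) i i = ∑ j, d j * k j i ^ 2 := by
  simp only [mul_apply (M := kᵀ * diagonal d), mul_diagonal, transpose_apply]
  exact Finset.sum_congr rfl fun j _ => by ring

theorem submatrix_transpose_mul_diagonal_mul_submatrix {R : Type*} [CommSemiring R]
    (k : Matrix n n R) (d : n → R) (σ : Equiv.Perm n) :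
    (k.submatrix σ id)ᵀ * diagonal d * k.submatrix σ id = kᵀ * diagonal (d ∘ σ.symm) * k := by
  ext i l
  simp only [mul_apply (M := _ * diagonal _), mul_diagonal, transpose_apply, submatrix_apply, id,
    Function.comp_apply]
  simpa using Equiv.sum_comp σ fun j => k j i * d (σ.symm j) * k j l

theorem submatrix_mem_specialOrthogonalGroup {R : Type*} [CommRing R] {k : Matrix n n R}
    (hk : k ∈ specialOrthogonalGroup n R) {σ : Equiv.Perm n} (hσ : Equiv.Perm.sign σ = 1) :
    k.submatrix σ id ∈ specialOrthogonalGroup n R := by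
  rw [mem_specialOrthogonalGroup_iff, mem_orthogonalGroup_iff'] at hk ⊢
  refine ⟨?_, by rw [det_permute, hσ, hk.2]; simp⟩
  rw [transpose_submatrix, submatrix_mul_equiv, hk.1, submatrix_id_id]

theorem zeroDiagConjSet_diagonal_nonempty_of_comp {d : n → ℝ} {σ : Equiv.Perm n}
    (hσ : Equiv.Perm.sign σ = 1) (h : (zeroDiagConjSet (diagonal (d ∘ σ.symm))).Nonempty) :
    (zeroDiagConjSet (diagonal d)).Nonempty := by
  obtain ⟨k, hk, hdiag⟩ := h
  exact ⟨k.submatrix σ id, submatrix_mem_specialOrthogonalGroup hk hσ,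
    by rwa [submatrix_transpose_mul_diagonal_mul_submatrix]⟩

end ZeroDiagConj

noncomputable def rotXY (θ : ℝ) : Matrix (Fin 3) (Fin 3) ℝ :=
  !![cos θ, -sin θ, 0; sin θ, cos θ, 0; 0, 0, 1]

noncomputable def rotYZ (θ : ℝ) : Matrix (Fin 3) (Fin 3) ℝ :=
  !![1, 0, 0; 0, cos θ, -sin θ; 0, sin θ, cos θ]

theorem rotXY_mem_specialOrthogonalGroup (θ : ℝ) :
    rotXY θ ∈ specialOrthogonalGroup (Fin 3) ℝ := by
  rw [mem_specialOrthogonalGroup_iff, mem_orthogonalGroup_iff']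
  constructor
  · ext i j
    fin_cases i <;> fin_cases j <;> simp [rotXY, mul_apply, Fin.sum_univ_three] <;> ring_nf <;> simp
  · simp [rotXY, det_fin_three, ← sq]

theorem rotYZ_mem_specialOrthogonalGroup (θ : ℝ) :
    rotYZ θ ∈ specialOrthogonalGroup (Fin 3) ℝ := by
  rw [mem_specialOrthogonalGroup_iff, mem_orthogonalGroup_iff']
  constructor
  · ext i j
    fin_cases i <;> fin_cases j <;> simp [rotYZ, mul_apply, Fin.sum_univ_three] <;> ring_nf <;> simp
  · simp [rotYZ, det_fin_three, ← sq]

theorem exists_mul_cos_sq_add_mul_sin_sq_eq_zero {x y : ℝ} (h : x * y ≤ 0) :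
    ∃ θ : ℝ, x * cos θ ^ 2 + y * sin θ ^ 2 = 0 := by
  have hcont : ContinuousOn (fun θ => x * cos θ ^ 2 + y * sin θ ^ 2) (Set.uIcc 0 (π / 2)) := by
    fun_prop
  have h0 : (0 : ℝ) ∈ Set.uIcc x y :=
    Set.mem_uIcc.2 ((mul_nonpos_iff.1 h).symm.imp_right And.symm)
  obtain ⟨θ, -, hθ⟩ := intermediate_value_uIcc hcont (by simpa using h0)
  exact ⟨θ, hθ⟩

theorem zeroDiagConjSet_diagonal_nonempty_of_mul_nonpos {a b c : ℝ} (h : a + b + c = 0)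
    (hab : a * b ≤ 0) : (zeroDiagConjSet (diagonal ![a, b, c])).Nonempty := by
  obtain ⟨θ, hθ⟩ := exists_mul_cos_sq_add_mul_sin_sq_eq_zero hab
  refine ⟨rotXY θ * rotYZ (π / 4), mul_mem (rotXY_mem_specialOrthogonalGroup θ)
    (rotYZ_mem_specialOrthogonalGroup _), fun i => ?_⟩
  rw [transpose_mul_diagonal_mul_apply_self, rotXY, rotYZ, mul_fin_three, Fin.sum_univ_three]
  fin_cases i
  · simpa using hθ
  all_goals
    simp only [of_apply, cons_val', cons_val_zero, cons_val_one, cons_val, cons_val_fin_one,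
      Fin.mk_one, Fin.reduceFinMk, cos_pi_div_four, sin_pi_div_four]
    linear_combination (√2 / 2) ^ 2 * ((a + b) * sin_sq_add_cos_sq θ - hθ + h)

theorem zeroDiagConjSet_diagonal_nonempty {a b c : ℝ} (h : a + b + c = 0) :
    (zeroDiagConjSet (diagonal ![a, b, c])).Nonempty := by
  have hpair : a * b ≤ 0 ∨ b * c ≤ 0 ∨ c * a ≤ 0 := by
    by_contra! ⟨hab, hbc, hca⟩
    nlinarith [sq_nonneg a, sq_nonneg b, sq_nonneg c, congrArg (· ^ 2) h]
  have hsign : Equiv.Perm.sign (finRotate 3) = 1 := by simp [sign_finRotate]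
  rcases hpair with hab | hbc | hca
  · exact zeroDiagConjSet_diagonal_nonempty_of_mul_nonpos h hab
  · refine zeroDiagConjSet_diagonal_nonempty_of_comp (σ := (finRotate 3).symm) (by simp [hsign]) ?_
    convert zeroDiagConjSet_diagonal_nonempty_of_mul_nonpos (c := a) (by linarith) hbc using 3
    ext i; fin_cases i <;> rfl
  · refine zeroDiagConjSet_diagonal_nonempty_of_comp hsign ?_
    convert zeroDiagConjSet_diagonal_nonempty_of_mul_nonpos (c := b) (by linarith) hca using 3
    ext i; fin_cases i <;> rfl

theorem stmt_18 (a b c : ℝ) (h : a + b + c = 0) :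
    ∃ k : Matrix (Fin 3) (Fin 3) ℝ,
      kᵀ * k = 1 ∧ k.det = 1 ∧
      ∀ i : Fin 3, (k⁻¹ * Matrix.diagonal ![a, b, c] * k) i i = 0 := by
  obtain ⟨k, hk, hdiag⟩ := zeroDiagConjSet_diagonal_nonempty h
  rw [mem_specialOrthogonalGroup_iff, mem_orthogonalGroup_iff'] at hk
  exact ⟨k, hk.1, hk.2, by rwa [inv_eq_left_inv hk.1]⟩
end
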